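/- No finite graph with three or more branch points is 7-arc connected. -/

import Mathlib

open Set Topology

/-- The points `0` and `1` of the unit interval `[0,1]`. -/
def i0 : Set.Icc (0:ℝ) 1 := ⟨0, by norm_num⟩
def i1 : Set.Icc (0:ℝ) 1 := ⟨1, by norm_num⟩

/-- A subset `A` of a topological space `X` is an *arc* if, with the subspace
topology, it is homeomorphic to the closed unit interval `[0,1]`. -/
def IsArc {X : Type*} [TopologicalSpace X] (A : Set X) : Prop :=
  Nonempty (A ≃ₜ Set.Icc (0:ℝ) 1)

/-- `X` is `n`-arc connected if any `n` points of `X` lie on a common arc. -/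
def NArcConnected (X : Type*) [TopologicalSpace X] (n : ℕ) : Prop :=
  ∀ p : Fin n → X, ∃ A : Set X, IsArc A ∧ ∀ i, p i ∈ A

open Classical
/-- A (connected, compact Hausdorff) topological finite graph structure on `X`:
finitely many arcs (edges), given as embeddings of `[0,1]`, covering `X`,
such that two distinct edges meet only in common endpoints. -/
structure TopGraph (X : Type*) [TopologicalSpace X] where
  n : ℕ
  edge : Fin n → Set.Icc (0:ℝ) 1 → X
  emb : ∀ i, Topology.IsEmbedding (edge i)
  cover : (⋃ i, Set.range (edge i)) = Set.univ
  meet : ∀ i j, i ≠ j → ∀ x ∈ Set.range (edge i) ∩ Set.range (edge j),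
    (x = edge i i0 ∨ x = edge i i1) ∧ (x = edge j i0 ∨ x = edge j i1)

/-- The degree (order) of a point of a finite graph: the number of edge-germs at it,
counted via incidences of edge endpoints.  (Points interior to an edge have order two;
they are never branch points.) -/
noncomputable def TopGraph.degree {X : Type*} [TopologicalSpace X] (G : TopGraph X) (x : X) : ℕ :=
  ∑ i : Fin G.n, ((if G.edge i i0 = x then 1 else 0) + (if G.edge i i1 = x then 1 else 0))

/-- A branch point of a finite graph is a point of order at least `3`. -/
def TopGraph.IsBranchPoint {X : Type*} [TopologicalSpace X] (G : TopGraph X) (x : X) : Prop :=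
  3 ≤ G.degree x

/-!
Three branch points of a connected finite graph span a *fork*: a branch point `v` joined to
branch points `u` and `w` by two paths which meet only at `v` and have no branch points inside.
The two open paths, together with at most five further open edges carrying the at least
`(3 - 1) + (3 - 2) + (3 - 1) = 5` remaining edge-ends at `u`, `v`, `w`, are at most seven
disjoint open sets, each with frontier inside its two ends, and their ends meet
`Y = {u, v, w}` at least `2 + 2 + 5 = 9` times.

An arc through one point of each of them cannot exist: walking along the arc from the chosen
point of such a set `O` towards one end of the arc, one either stays in `O` up to that end or
leaves `O` through a point of its frontier. For each direction, distinct sets leave through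
distinct points and at most one of them reaches the end, so at most `2 * |Y| + 2 = 8` ends
lie in `Y`.
-/

open Function

section ExitCounting

variable {X : Type*}

theorem card_pair_inter_le_ite {a b : X} {l r : Option X} (hl : ∀ y, l = some y → y = a ∨ y = b)
    (hr : ∀ y, r = some y → y = a ∨ y = b) (hlr : l = r → l = none) (Y : Finset X) :
    ({a, b} ∩ Y).card ≤
      (if l ∈ Finset.insertNone Y then 1 else 0) + (if r ∈ Finset.insertNone Y then 1 else 0) := by
  have h2 : ({a, b} ∩ Y).card ≤ 2 :=
    (Finset.card_le_card Finset.inter_subset_left).trans Finset.card_le_two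
  have h1 : ∀ y, y = a ∨ y = b → y ∉ Y → ({a, b} ∩ Y).card ≤ 1 := by
    rintro y hy hyY
    refine Finset.card_le_one.2 fun x hx x' hx' => ?_
    simp only [Finset.mem_inter, Finset.mem_insert, Finset.mem_singleton] at hx hx'
    grind
  rcases l with _ | y <;> rcases r with _ | z
  · simpa using h2
  · by_cases hz : z ∈ Y <;> simp [hz, h2, h1 z (hr z rfl)]
  · by_cases hy : y ∈ Y <;> simp [hy, h2, h1 y (hl y rfl)]
  · have hyz : y ≠ z := fun h => by simpa using hlr (congrArg some h)
    have hab : ({a, b} : Finset X) = {y, z} := by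
      rcases hl y rfl with rfl | rfl <;> rcases hr z rfl with rfl | rfl <;>
        simp_all [Finset.pair_comm]
    rw [hab]
    by_cases hy : y ∈ Y <;> by_cases hz : z ∈ Y <;>
      simp [hy, hz, hyz, Finset.insert_inter_of_mem, Finset.insert_inter_of_notMem]

theorem sum_card_pair_inter_le_of_injective {ι : Type*} [Fintype ι] {a b : ι → X}
    {l r : ι → Option X} (hl_inj : Injective l) (hr_inj : Injective r)
    (hl : ∀ i y, l i = some y → y = a i ∨ y = b i)
    (hr : ∀ i y, r i = some y → y = a i ∨ y = b i)
    (hlr : ∀ i, l i = r i → l i = none) (Y : Finset X) :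
    ∑ i, ({a i, b i} ∩ Y).card ≤ 2 * Y.card + 2 := by
  have hcount : ∀ f : ι → Option X, Injective f →
      ∑ i, (if f i ∈ Finset.insertNone Y then 1 else 0) ≤ Y.card + 1 := fun f hf => by
    rw [Finset.sum_boole, Nat.cast_id, ← Finset.card_insertNone]
    exact Finset.card_le_card_of_injOn f (fun i hi => (Finset.mem_filter.1 hi).2) hf.injOn
  calc ∑ i, ({a i, b i} ∩ Y).card
      ≤ ∑ i, ((if l i ∈ Finset.insertNone Y then 1 else 0) +
          (if r i ∈ Finset.insertNone Y then 1 else 0)) :=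
        Finset.sum_le_sum fun i _ => card_pair_inter_le_ite (hl i) (hr i) (hlr i) Y
    _ ≤ 2 * Y.card + 2 := by
        rw [Finset.sum_add_distrib]
        linarith [hcount l hl_inj, hcount r hr_inj]

end ExitCounting

section ArcExits

variable {α : Type*} [LinearOrder α] [TopologicalSpace α] [OrderTopology α] [DenselyOrdered α]
  [CompactSpace α]

/-- `s` is the last point of `Uᶜ` below `t`, or `⊥` if there is none. -/
theorem exists_withBot_lt_frontier_Ioc_subset {U : Set α} (hU : IsOpen U) {t : α} (ht : t ∈ U) :
    ∃ s : WithBot α, s < t ∧ (∀ x : α, ↑x = s → x ∈ frontier U) ∧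
      ∀ x : α, s < x → x ≤ t → x ∈ U := by
  by_cases hC : (Uᶜ ∩ Iic t).Nonempty
  · obtain ⟨s, ⟨hsU, hst⟩, hmax⟩ :=
      (hU.isClosed_compl.inter isClosed_Iic).isCompact.exists_isGreatest hC
    have hst : s < t := lt_of_le_of_ne hst fun h => hsU (h ▸ ht)
    have hIoc : Ioc s t ⊆ U := fun x hx => by_contra fun hxU => (hmax ⟨hxU, hx.2⟩).not_gt hx.1
    refine ⟨s, WithBot.coe_lt_coe.2 hst, fun x hx => ?_,
      fun x hsx hxt => hIoc ⟨WithBot.coe_lt_coe.1 hsx, hxt⟩⟩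
    obtain rfl := WithBot.coe_injective hx
    rw [hU.frontier_eq]
    exact ⟨closure_mono hIoc (closure_Ioc hst.ne ▸ left_mem_Icc.2 hst.le), hsU⟩
  · refine ⟨⊥, WithBot.bot_lt_coe t, fun x hx => (WithBot.coe_ne_bot hx).elim, fun x _ hxt => ?_⟩
    by_contra hxU
    exact hC ⟨x, hxU, hxt⟩

variable {X : Type*} [TopologicalSpace X] {ι : Type*}

theorem exists_injective_withBot_lt_frontier {γ : α → X} (hγ : Continuous γ) {O : ι → Set X}
    (hO : ∀ i, IsOpen (O i)) (hdisj : Pairwise (Disjoint on O)) {t : ι → α}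
    (ht : ∀ i, γ (t i) ∈ O i) :
    ∃ s : ι → WithBot α, Injective s ∧
      ∀ i, s i < t i ∧ ∀ x : α, ↑x = s i → γ x ∈ frontier (O i) := by
  choose s hst hfr hIoc using fun i => exists_withBot_lt_frontier_Ioc_subset
    ((hO i).preimage hγ) (ht i)
  refine ⟨s, fun i j hij => by_contra fun hne => ?_, fun i => ⟨hst i, fun x hx => ?_⟩⟩
  · have hi : s i < ↑(min (t i) (t j)) := by
      rw [WithBot.coe_min, lt_min_iff]; exact ⟨hst i, hij ▸ hst j⟩
    exact (hdisj hne).ne_of_mem (hIoc i _ hi (min_le_left _ _))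
      (hIoc j _ (hij ▸ hi) (min_le_right _ _)) rfl
  · have := hfr i x hx
    rw [(hO i).frontier_eq]
    rw [((hO i).preimage hγ).frontier_eq] at this
    exact ⟨hγ.closure_preimage_subset _ this.1, this.2⟩

end ArcExits

section ArcCounting

variable {X : Type*} [TopologicalSpace X] {ι : Type*} [Fintype ι]

theorem sum_card_pair_inter_le_of_continuous_injective {α : Type*} [LinearOrder α]
    [TopologicalSpace α] [OrderTopology α] [DenselyOrdered α] [CompactSpace α] {γ : α → X}
    (hγ : Continuous γ) (hγ_inj : Injective γ) {O : ι → Set X} (hO : ∀ i, IsOpen (O i))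
    (hdisj : Pairwise (Disjoint on O)) (hmeet : ∀ i, ∃ t, γ t ∈ O i) {a b : ι → X}
    (hfr : ∀ i, frontier (O i) ⊆ {a i, b i}) (Y : Finset X) :
    ∑ i, ({a i, b i} ∩ Y).card ≤ 2 * Y.card + 2 := by
  choose t ht using hmeet
  have : CompactSpace αᵒᵈ := ‹CompactSpace α›
  obtain ⟨sl, hsl_inj, hsl⟩ := exists_injective_withBot_lt_frontier hγ hO hdisj ht
  obtain ⟨sr, hsr_inj, hsr⟩ := exists_injective_withBot_lt_frontier (α := αᵒᵈ)
    (hγ.comp continuous_ofDual) hO hdisj (t := fun i => OrderDual.toDual (t i)) ht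
  have hexit : ∀ {β : Type _} (s : WithBot β) (f : β → X) (P : X → Prop),
      (∀ x : β, ↑x = s → P (f x)) → ∀ y, Option.map f s = some y → P y := by
    intro β s f P h y hy
    cases s with
    | bot => cases hy
    | coe x => cases hy; exact h x rfl
  refine sum_card_pair_inter_le_of_injective (l := fun i => Option.map γ (sl i))
    (r := fun i => Option.map (γ ∘ OrderDual.ofDual) (sr i))
    ((Option.map_injective hγ_inj).comp hsl_inj)
    ((Option.map_injective (hγ_inj.comp OrderDual.ofDual.injective)).comp hsr_inj)
    (fun i => hexit _ _ _ fun x hx => hfr i ((hsl i).2 x hx))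
    (fun i => hexit _ _ _ fun x hx => hfr i ((hsr i).2 x hx)) (fun i h => ?_) Y
  cases hl : sl i with
  | bot => rfl
  | coe x =>
    cases hr : sr i with
    | bot => rw [hl, hr] at h; cases h
    | coe x' =>
      rw [hl, hr] at h
      have h1 := hl ▸ (hsl i).1
      have h2 := hr ▸ (hsr i).1
      rw [WithBot.coe_lt_coe] at h1 h2
      exact absurd (h1.trans (hγ_inj (Option.some.inj h) ▸ h2)) (lt_irrefl _)

theorem IsArc.sum_card_pair_inter_le {A : Set X} (hA : IsArc A) {O : ι → Set X}
    (hO : ∀ i, IsOpen (O i)) (hdisj : Pairwise (Disjoint on O)) (hmeet : ∀ i, (O i ∩ A).Nonempty)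
    {a b : ι → X} (hfr : ∀ i, frontier (O i) ⊆ {a i, b i}) (Y : Finset X) :
    ∑ i, ({a i, b i} ∩ Y).card ≤ 2 * Y.card + 2 := by
  obtain ⟨e⟩ := hA
  refine sum_card_pair_inter_le_of_continuous_injective
    (continuous_subtype_val.comp e.symm.continuous)
    (Subtype.val_injective.comp e.symm.injective) hO hdisj (fun i => ?_) hfr Y
  obtain ⟨x, hxO, hxA⟩ := hmeet i
  exact ⟨e ⟨x, hxA⟩, by simpa using hxO⟩

end ArcCounting

theorem Finset.exists_subset_card_le_le_sum {ι : Type*} {s : Finset ι} {f : ι → ℕ} {k : ℕ}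
    (h : k ≤ ∑ i ∈ s, f i) : ∃ t ⊆ s, t.card ≤ k ∧ k ≤ ∑ i ∈ t, f i := by
  set s' := s.filter fun i => f i ≠ 0
  have hs' : ∑ i ∈ s', f i = ∑ i ∈ s, f i := Finset.sum_filter_ne_zero s
  by_cases hk : s'.card ≤ k
  · exact ⟨s', Finset.filter_subset _ _, hk, hs' ▸ h⟩
  obtain ⟨t, hts, htk⟩ := Finset.exists_subset_card_eq (le_of_not_ge hk)
  refine ⟨t, hts.trans (Finset.filter_subset _ _), htk.le, ?_⟩
  calc k = ∑ _i ∈ t, 1 := by simp [htk]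
    _ ≤ ∑ i ∈ t, f i := Finset.sum_le_sum fun i hi =>
      Nat.one_le_iff_ne_zero.2 (Finset.mem_filter.1 (hts hi)).2

theorem NArcConnected.exists_isArc_superset {X : Type*} [TopologicalSpace X] {n : ℕ}
    (h : NArcConnected X n) {s : Finset X} (hs : s.card ≤ n) (hne : s.Nonempty) :
    ∃ A, IsArc A ∧ (s : Set X) ⊆ A := by
  obtain ⟨x₀, -⟩ := hne
  set e := Fintype.equivFin {x // x ∈ s}
  obtain ⟨A, hA, hpA⟩ :=
    h fun i => if hi : (i : ℕ) < Fintype.card {x // x ∈ s} then (e.symm ⟨i, hi⟩ : X) else x₀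
  refine ⟨A, hA, fun x hx => ?_⟩
  have := hpA ⟨e ⟨x, hx⟩, (e ⟨x, hx⟩).2.trans_le (by simpa using hs)⟩
  simpa only [Fin.is_lt, dif_pos, Fin.eta, Equiv.symm_apply_apply] using this

theorem Set.pairwise_disjoint_sumElim_singleton {α : Type*} {S₁ S₂ : Set α} {E : Finset α}
    (h : Disjoint S₁ S₂) (hE : ∀ i ∈ E, i ∉ S₁ ∪ S₂) :
    Pairwise (Disjoint on
      Sum.elim (fun b : Bool => cond b S₂ S₁) fun i : E => ({i.1} : Set α)) := by
  rintro ((_ | _) | i) ((_ | _) | j) hij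
  all_goals simp only [onFun, Sum.elim_inl, Sum.elim_inr, cond_true, cond_false]
  · exact absurd rfl hij
  · exact h
  · exact Set.disjoint_singleton_right.2 fun h => hE j j.2 (Or.inl h)
  · exact h.symm
  · exact absurd rfl hij
  · exact Set.disjoint_singleton_right.2 fun h => hE j j.2 (Or.inr h)
  · exact Set.disjoint_singleton_left.2 fun h => hE i i.2 (Or.inl h)
  · exact Set.disjoint_singleton_left.2 fun h => hE i i.2 (Or.inr h)
  · exact Set.disjoint_singleton.2 fun h => hij (congrArg Sum.inr (Subtype.ext h))

namespace SimpleGraph.Walk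

variable {V : Type*} {H : SimpleGraph V}

theorem IsPath.exists_mem_edges_ne {u v x : V} {p : H.Walk u v} (hp : p.IsPath)
    (hx : x ∈ p.support) (hxu : x ≠ u) (hxv : x ≠ v) :
    ∃ e₁ ∈ p.edges, ∃ e₂ ∈ p.edges, e₁ ≠ e₂ ∧ x ∈ e₁ ∧ x ∈ e₂ := by
  have h₁ : ¬ (p.takeUntil x hx).Nil := not_nil_of_ne hxu.symm
  have h₂ : ¬ (p.dropUntil x hx).Nil := not_nil_of_ne hxv
  refine ⟨_, edges_takeUntil_subset_edges p hx (mk_penultimate_end_mem_edges h₁),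
    _, edges_dropUntil_subset_edges p hx (mk_start_snd_mem_edges h₂), fun h => ?_,
    Sym2.mem_mk_right _ _, Sym2.mem_mk_left _ _⟩
  exact hp.isTrail.disjoint_edges_takeUntil_dropUntil hx (mk_penultimate_end_mem_edges h₁)
    (h ▸ mk_start_snd_mem_edges h₂)

theorem exists_isPath_first_mem {x y : V} (q : H.Walk x y) {T : Set V} (hy : y ∈ T) :
    ∃ z ∈ T, ∃ r : H.Walk x z, r.IsPath ∧ r.support ⊆ q.support ∧
      ∀ t ∈ r.support, t ∈ T → t = z := by
  induction q with
  | nil => exact ⟨_, hy, nil, IsPath.nil, List.Subset.refl _, by simp⟩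
  | @cons x s y h q ih =>
    by_cases hx : x ∈ T
    · exact ⟨x, hx, nil, IsPath.nil, by simp, by simp⟩
    obtain ⟨z, hz, r, -, hrq, hrT⟩ := ih hy
    refine ⟨z, hz, (cons h r).bypass, bypass_isPath _, fun t ht => ?_, fun t ht htT => ?_⟩ <;>
      rcases List.mem_cons.1 (support_bypass_subset_support _ ht) with rfl | ht'
    · exact List.mem_cons_self
    · exact List.mem_cons_of_mem _ (hrq ht')
    · exact absurd htT hx
    · exact hrT t ht' htT

end SimpleGraph.Walk

namespace TopGraph

variable {X : Type*} [TopologicalSpace X]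

section Edges

variable (G : TopGraph X)

def ends (i : Fin G.n) : Sym2 X := s(G.edge i i0, G.edge i i1)

def IsVertex (x : X) : Prop := ∃ i, x ∈ G.ends i

noncomputable def mid (i : Fin G.n) : X := G.edge i ⟨1 / 2, by norm_num⟩

theorem edge_i0_ne_edge_i1 (i : Fin G.n) : G.edge i i0 ≠ G.edge i i1 := fun h => by
  simpa [i0, i1] using congrArg Subtype.val ((G.emb i).injective h)

theorem mem_ends_of_mem_range_inter {i j : Fin G.n} (hij : i ≠ j) {x : X}
    (hi : x ∈ range (G.edge i)) (hj : x ∈ range (G.edge j)) : x ∈ G.ends i ∧ x ∈ G.ends j := by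
  obtain ⟨h1, h2⟩ := G.meet i j hij x ⟨hi, hj⟩
  exact ⟨by rcases h1 with rfl | rfl <;> simp [ends], by rcases h2 with rfl | rfl <;> simp [ends]⟩

theorem mem_range_of_mem_ends {i : Fin G.n} {x : X} (hx : x ∈ G.ends i) : x ∈ range (G.edge i) := by
  rcases Sym2.mem_iff.1 hx with rfl | rfl <;> exact mem_range_self _

theorem exists_mem_range (x : X) : ∃ i, x ∈ range (G.edge i) :=
  mem_iUnion.1 (G.cover ▸ mem_univ x)

noncomputable def edgesAt (x : X) : Finset (Fin G.n) := Finset.univ.filter fun i => x ∈ G.ends i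

theorem degree_eq_card_edgesAt (x : X) : G.degree x = (G.edgesAt x).card := by
  rw [degree, edgesAt, Finset.card_filter]
  refine Finset.sum_congr rfl fun i _ => ?_
  have := G.edge_i0_ne_edge_i1 i
  by_cases h0 : G.edge i i0 = x <;> by_cases h1 : G.edge i i1 = x <;> simp_all [ends, eq_comm]

theorem isBranchPoint_of_mem_ends {x : X} {i j k : Fin G.n} (hij : i ≠ j) (hik : i ≠ k)
    (hjk : j ≠ k) (hi : x ∈ G.ends i) (hj : x ∈ G.ends j) (hk : x ∈ G.ends k) :
    G.IsBranchPoint x := by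
  rw [IsBranchPoint, degree_eq_card_edgesAt]
  exact Finset.two_lt_card.2 ⟨i, by simpa [edgesAt], j, by simpa [edgesAt], k, by simpa [edgesAt],
    hij, hik, hjk⟩

theorem sum_card_pair_inter_eq (E : Finset (Fin G.n)) (Y : Finset X) :
    ∑ i ∈ E, ({G.edge i i0, G.edge i i1} ∩ Y).card =
      ∑ y ∈ Y, ((G.edgesAt y).filter (· ∈ E)).card := by
  have h₁ : ∀ i, {G.edge i i0, G.edge i i1} ∩ Y = Y.bipartiteAbove (fun i y => y ∈ G.ends i) i :=
    fun i => by ext y; simp [Finset.bipartiteAbove, ends, and_comm]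
  have h₂ : ∀ y, (G.edgesAt y).filter (· ∈ E) = E.bipartiteBelow (fun i y => y ∈ G.ends i) y :=
    fun y => by ext i; simp [Finset.bipartiteBelow, edgesAt, and_comm]
  simp only [h₁, h₂]
  exact Finset.sum_card_bipartiteAbove_eq_sum_card_bipartiteBelow _

theorem exists_finset_card_le_le_sum_card_pair_inter (P : Fin G.n → Prop) [DecidablePred P]
    (Y : Finset X) {k : ℕ} (h : k ≤ ∑ y ∈ Y, ((G.edgesAt y).filter P).card) :
    ∃ E : Finset (Fin G.n), (∀ i ∈ E, P i) ∧ E.card ≤ k ∧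
      k ≤ ∑ i ∈ E, ({G.edge i i0, G.edge i i1} ∩ Y).card := by
  have hE := G.sum_card_pair_inter_eq (Finset.univ.filter P) Y
  simp only [Finset.mem_filter, Finset.mem_univ, true_and] at hE
  obtain ⟨E, hE₀, hEk, hkE⟩ := Finset.exists_subset_card_le_le_sum (hE ▸ h)
  exact ⟨E, fun i hi => (Finset.mem_filter.1 (hE₀ hi)).2, hEk, hkE⟩

theorem card_edgesAt_le (S T : Set (Fin G.n)) (x : X) :
    (G.edgesAt x).card ≤ ((G.edgesAt x).filter (· ∉ S ∪ T)).card +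
      ((G.edgesAt x).filter (· ∈ S)).card + ((G.edgesAt x).filter (· ∈ T)).card := by
  rw [← Finset.card_filter_add_card_filter_not (p := (· ∉ S ∪ T)), add_assoc]
  refine Nat.add_le_add_left ((Finset.card_le_card fun i hi => ?_).trans
    (Finset.card_union_le ((G.edgesAt x).filter (· ∈ S)) ((G.edgesAt x).filter (· ∈ T)))) _
  simp only [Finset.mem_filter, not_not, mem_union] at hi
  simp only [Finset.mem_union, Finset.mem_filter]
  tauto

theorem IsBranchPoint.isVertex {x : X} (hx : G.IsBranchPoint x) : G.IsVertex x := by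
  rw [IsBranchPoint, degree_eq_card_edgesAt] at hx
  obtain ⟨i, hi⟩ := Finset.card_pos.1 (lt_of_lt_of_le three_pos hx)
  exact ⟨i, (Finset.mem_filter.1 hi).2⟩

theorem mid_notMem_ends (i j : Fin G.n) : G.mid i ∉ G.ends j := by
  have hself : G.mid i ∉ G.ends i := fun h => by
    rcases Sym2.mem_iff.1 h with h | h <;>
      simpa [i0, i1] using congrArg Subtype.val ((G.emb i).injective h)
  intro h
  by_cases hij : i = j
  · exact hself (hij ▸ h)
  · exact hself (G.mem_ends_of_mem_range_inter hij (mem_range_self _) (G.mem_range_of_mem_ends h)).1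

def span (S : Set (Fin G.n)) : Set X := ⋃ i ∈ S, range (G.edge i)

def Separates (B : Set X) (S : Set (Fin G.n)) : Prop :=
  ∀ j ∉ S, G.span S ∩ range (G.edge j) ⊆ B

theorem separates_singleton (i : Fin G.n) : G.Separates {G.edge i i0, G.edge i i1} {i} := by
  rintro j hj x ⟨hx, hxj⟩
  simp only [span, mem_singleton_iff, iUnion_iUnion_eq_left] at hx
  simpa [ends] using (G.mem_ends_of_mem_range_inter (Ne.symm hj) hx hxj).1

variable {G}

theorem mid_mem_span_diff {S : Set (Fin G.n)} {i : Fin G.n} (hi : i ∈ S) {B : Set X}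
    (hB : ∀ x ∈ B, G.IsVertex x) : G.mid i ∈ G.span S \ B :=
  ⟨mem_biUnion hi (mem_range_self _), fun h => by
    obtain ⟨j, hj⟩ := hB _ h
    exact G.mid_notMem_ends i j hj⟩

theorem Separates.disjoint {B B' : Set X} {S S' : Set (Fin G.n)} (h : G.Separates B S)
    (hSS' : Disjoint S S') : Disjoint (G.span S \ B) (G.span S' \ B') := by
  refine Set.disjoint_left.2 fun x ⟨hxS, hxB⟩ ⟨hxS', _⟩ => hxB ?_
  obtain ⟨j, hj, hxj⟩ := mem_iUnion₂.1 hxS'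
  exact h j (hSS'.notMem_of_mem_right hj) ⟨hxS, hxj⟩

variable [T2Space X]

theorem isClosed_span (S : Set (Fin G.n)) : IsClosed (G.span S) :=
  (toFinite S).isClosed_biUnion fun i _ =>
    (isCompact_range (G.emb i).continuous).isClosed

theorem Separates.isOpen {B : Set X} {S : Set (Fin G.n)} (h : G.Separates B S) (hB : B.Finite) :
    IsOpen (G.span S \ B) := by
  have : G.span S \ B = (B ∪ G.span Sᶜ)ᶜ := by
    ext x
    simp only [mem_sdiff, mem_compl_iff, mem_union, not_or]
    constructor
    · rintro ⟨hxS, hxB⟩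
      refine ⟨hxB, fun hx => ?_⟩
      obtain ⟨j, hj, hxj⟩ := mem_iUnion₂.1 hx
      exact hxB (h j hj ⟨hxS, hxj⟩)
    · rintro ⟨hxB, hx⟩
      obtain ⟨j, hj⟩ := G.exists_mem_range x
      refine ⟨mem_biUnion (by_contra fun hjS => hx (mem_biUnion hjS hj)) hj, hxB⟩
  rw [this]
  exact (hB.isClosed.union (G.isClosed_span _)).isOpen_compl

theorem Separates.frontier_subset {B : Set X} {S : Set (Fin G.n)} (h : G.Separates B S)
    (hB : B.Finite) : frontier (G.span S \ B) ⊆ B := by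
  rw [(h.isOpen hB).frontier_eq]
  rintro x ⟨hx, hxn⟩
  have := closure_minimal sdiff_subset (G.isClosed_span S) hx
  by_contra hxB
  exact hxn ⟨this, hxB⟩

theorem Separates.span_eq_univ [ConnectedSpace X] {S : Set (Fin G.n)} (h : G.Separates ∅ S)
    (hS : S.Nonempty) : G.span S = univ := by
  have hopen := h.isOpen finite_empty
  rw [sdiff_empty] at hopen
  obtain ⟨i, hi⟩ := hS
  exact IsClopen.eq_univ ⟨G.isClosed_span S, hopen⟩ ⟨_, mem_biUnion hi (mem_range_self i0)⟩

theorem sum_card_pair_inter_le_of_isArc {ι : Type*} [Fintype ι] {S : ι → Set (Fin G.n)}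
    {a b : ι → X} (hsep : ∀ k, G.Separates {a k, b k} (S k)) (hdisj : Pairwise (Disjoint on S))
    (hv : ∀ k, G.IsVertex (a k) ∧ G.IsVertex (b k)) {A : Set X} (hA : IsArc A)
    (hmid : ∀ k, ∃ i ∈ S k, G.mid i ∈ A) (Y : Finset X) :
    ∑ k, ({a k, b k} ∩ Y).card ≤ 2 * Y.card + 2 := by
  refine hA.sum_card_pair_inter_le (O := fun k => G.span (S k) \ {a k, b k})
    (fun k => (hsep k).isOpen (toFinite _)) (fun k l hkl => (hsep k).disjoint (hdisj hkl))
    (fun k => ?_) (fun k => (hsep k).frontier_subset (toFinite _)) Y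
  obtain ⟨i, hi, hiA⟩ := hmid k
  refine ⟨G.mid i, mid_mem_span_diff hi ?_, hiA⟩
  rintro x (rfl | rfl)
  exacts [(hv k).1, (hv k).2]

end Edges

section Walks

variable (G : TopGraph X)

def graph : SimpleGraph X := SimpleGraph.fromEdgeSet (range G.ends)

theorem exists_ends_eq_of_mem_edgeSet {e : Sym2 X} (he : e ∈ G.graph.edgeSet) :
    ∃ i, G.ends i = e := by
  rw [graph, SimpleGraph.edgeSet_fromEdgeSet] at he
  exact he.1

theorem graph_adj_of_mem_ends {i : Fin G.n} {x y : X} (hx : x ∈ G.ends i) (hy : y ∈ G.ends i)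
    (hxy : x ≠ y) : G.graph.Adj x y := by
  rw [graph, SimpleGraph.fromEdgeSet_adj]
  exact ⟨⟨i, (Sym2.mem_and_mem_iff hxy).1 ⟨hx, hy⟩⟩, hxy⟩

theorem reachable_of_mem_ends {i : Fin G.n} {x y : X} (hx : x ∈ G.ends i) (hy : y ∈ G.ends i) :
    G.graph.Reachable x y := by
  by_cases hxy : x = y
  · exact hxy ▸ SimpleGraph.Reachable.refl x
  · exact (G.graph_adj_of_mem_ends hx hy hxy).reachable

theorem reachable_of_isVertex [T2Space X] [ConnectedSpace X] {x y : X} (hx : G.IsVertex x)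
    (hy : G.IsVertex y) : G.graph.Reachable x y := by
  set S : Set (Fin G.n) := {i | ∃ z ∈ G.ends i, G.graph.Reachable x z}
  have hS : ∀ i ∈ S, ∀ z ∈ G.ends i, G.graph.Reachable x z := fun i ⟨z', hz', hxz'⟩ z hz =>
    hxz'.trans (G.reachable_of_mem_ends hz' hz)
  have hsep : G.Separates ∅ S := by
    rintro j hj z ⟨hzS, hzj⟩
    obtain ⟨i, hi, hzi⟩ := mem_iUnion₂.1 hzS
    have hij : i ≠ j := fun h => hj (h ▸ hi)
    have hz := G.mem_ends_of_mem_range_inter hij hzi hzj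
    exact hj ⟨z, hz.2, hS i hi z hz.1⟩
  obtain ⟨ix, hix⟩ := hx
  obtain ⟨iy, hiy⟩ := hy
  have hspan := hsep.span_eq_univ ⟨ix, x, hix, SimpleGraph.Reachable.refl x⟩
  obtain ⟨i, hi, hyi⟩ := mem_iUnion₂.1 (hspan ▸ mem_univ y)
  by_cases hiy' : i = iy
  · exact hS i hi y (hiy' ▸ hiy)
  · exact hS i hi y (G.mem_ends_of_mem_range_inter hiy' hyi (G.mem_range_of_mem_ends hiy)).1

variable {G} {u v w x : X}

/-- The edges of `G` carrying the edges of the walk `p`; among parallel edges only the one of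
least index is taken. -/
def walkEdges {u v : X} (p : G.graph.Walk u v) : Set (Fin G.n) :=
  {i | G.ends i ∈ p.edges ∧ ∀ j, G.ends j = G.ends i → i ≤ j}

theorem exists_mem_walkEdges {p : G.graph.Walk u v} {e : Sym2 X} (he : e ∈ p.edges) :
    ∃ i ∈ G.walkEdges p, G.ends i = e := by
  obtain ⟨j, hj⟩ := G.exists_ends_eq_of_mem_edgeSet (p.edges_subset_edgeSet he)
  obtain ⟨i, hi, hmin⟩ :=
    (Finset.univ.filter fun i => G.ends i = e).exists_min_image id ⟨j, by simpa using hj⟩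
  rw [Finset.mem_filter] at hi
  exact ⟨i, ⟨hi.2 ▸ he, fun k hk => hmin k (by simp [hk, hi.2])⟩, hi.2⟩

theorem eq_of_mem_walkEdges {u' v' : X} {p : G.graph.Walk u v} {q : G.graph.Walk u' v'}
    {i j : Fin G.n} (hi : i ∈ G.walkEdges p) (hj : j ∈ G.walkEdges q) (h : G.ends i = G.ends j) :
    i = j :=
  le_antisymm (hi.2 j h.symm) (hj.2 i h)

theorem mem_support_of_mem_walkEdges {p : G.graph.Walk u v} {i : Fin G.n}
    (hi : i ∈ G.walkEdges p) (hx : x ∈ G.ends i) : x ∈ p.support := by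
  rcases Sym2.mem_iff.1 hx with rfl | rfl
  exacts [p.fst_mem_support_of_mem_edges hi.1, p.snd_mem_support_of_mem_edges hi.1]

theorem walkEdges_reverse (p : G.graph.Walk u v) : G.walkEdges p.reverse = G.walkEdges p := by
  simp [walkEdges, SimpleGraph.Walk.edges_reverse]

theorem walkEdges_nonempty (p : G.graph.Walk u v) (huv : u ≠ v) : (G.walkEdges p).Nonempty :=
  let ⟨i, hi, _⟩ := exists_mem_walkEdges
    (SimpleGraph.Walk.mk_start_snd_mem_edges (SimpleGraph.Walk.not_nil_of_ne huv))
  ⟨i, hi⟩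

theorem card_filter_walkEdges_eq_zero {p : G.graph.Walk u v} (hx : x ∉ p.support) :
    ((G.edgesAt x).filter (· ∈ G.walkEdges p)).card = 0 := by
  refine Finset.card_eq_zero.2 (Finset.filter_eq_empty_iff.2 fun i hi hip => hx ?_)
  exact mem_support_of_mem_walkEdges hip (Finset.mem_filter.1 hi).2

theorem card_filter_walkEdges_start_le_one {p : G.graph.Walk u v} (hp : p.IsPath) :
    ((G.edgesAt u).filter (· ∈ G.walkEdges p)).card ≤ 1 := by
  have key : ∀ i ∈ (G.edgesAt u).filter (· ∈ G.walkEdges p), G.ends i = s(u, p.snd) := by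
    intro i hi
    obtain ⟨hu, hip⟩ := Finset.mem_filter.1 hi
    obtain ⟨y, hy⟩ := Sym2.mem_iff_exists.1 (Finset.mem_filter.1 hu).2
    rw [hy, ← hp.eq_snd_of_mem_edges (hy ▸ hip.1)]
  refine Finset.card_le_one.2 fun i hi j hj => eq_of_mem_walkEdges (Finset.mem_filter.1 hi).2
    (Finset.mem_filter.1 hj).2 ((key i hi).trans (key j hj).symm)

theorem card_filter_walkEdges_end_le_one {p : G.graph.Walk u v} (hp : p.IsPath) :
    ((G.edgesAt v).filter (· ∈ G.walkEdges p)).card ≤ 1 :=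
  walkEdges_reverse p ▸ card_filter_walkEdges_start_le_one hp.reverse

theorem disjoint_walkEdges {w : X} {p : G.graph.Walk v u} {q : G.graph.Walk v w}
    (hpq : ∀ t ∈ p.support, t ∈ q.support → t = v) : Disjoint (G.walkEdges p) (G.walkEdges q) := by
  refine Set.disjoint_left.2 fun i hip hiq => G.edge_i0_ne_edge_i1 i ?_
  have h : ∀ x ∈ G.ends i, x = v := fun x hx =>
    hpq x (mem_support_of_mem_walkEdges hip hx) (mem_support_of_mem_walkEdges hiq hx)
  rw [h _ (Sym2.mem_mk_left _ _), h _ (Sym2.mem_mk_right _ _)]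

theorem isBranchPoint_of_mem_edgeSet {e₁ e₂ e₃ : Sym2 X} (h₁ : e₁ ∈ G.graph.edgeSet)
    (h₂ : e₂ ∈ G.graph.edgeSet) (h₃ : e₃ ∈ G.graph.edgeSet) (h₁₂ : e₁ ≠ e₂) (h₁₃ : e₁ ≠ e₃)
    (h₂₃ : e₂ ≠ e₃) (hx₁ : x ∈ e₁) (hx₂ : x ∈ e₂) (hx₃ : x ∈ e₃) : G.IsBranchPoint x := by
  obtain ⟨i, rfl⟩ := G.exists_ends_eq_of_mem_edgeSet h₁
  obtain ⟨j, rfl⟩ := G.exists_ends_eq_of_mem_edgeSet h₂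
  obtain ⟨k, rfl⟩ := G.exists_ends_eq_of_mem_edgeSet h₃
  exact G.isBranchPoint_of_mem_ends (fun h => h₁₂ (congrArg G.ends h))
    (fun h => h₁₃ (congrArg G.ends h)) (fun h => h₂₃ (congrArg G.ends h)) hx₁ hx₂ hx₃

theorem isBranchPoint_of_adj_of_notMem_support {p : G.graph.Walk u v} (hp : p.IsPath)
    (hx : x ∈ p.support) (hxu : x ≠ u) (hxv : x ≠ v) {t : X} (ht : G.graph.Adj t x) (htp : t ∉ p.support) :
    G.IsBranchPoint x := by
  obtain ⟨e₁, he₁, e₂, he₂, hne, hx₁, hx₂⟩ := hp.exists_mem_edges_ne hx hxu hxv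
  have hnot : s(t, x) ∉ p.edges := fun h => htp (p.fst_mem_support_of_mem_edges h)
  exact isBranchPoint_of_mem_edgeSet (p.edges_subset_edgeSet he₁) (p.edges_subset_edgeSet he₂) ht
    hne (ne_of_mem_of_not_mem he₁ hnot) (ne_of_mem_of_not_mem he₂ hnot) hx₁ hx₂
    (Sym2.mem_mk_right _ _)

def IsBranchFree (p : G.graph.Walk u v) : Prop :=
  ∀ t ∈ p.support, t ≠ u → t ≠ v → ¬ G.IsBranchPoint t

theorem separates_walkEdges {p : G.graph.Walk u v} (hp : p.IsPath)
    (hfree : IsBranchFree p) : G.Separates {u, v} (G.walkEdges p) := by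
  rintro j hj x ⟨hxS, hxj⟩
  obtain ⟨i, hi, hxi⟩ := mem_iUnion₂.1 hxS
  obtain ⟨hxi', hxj'⟩ := G.mem_ends_of_mem_range_inter (ne_of_mem_of_not_mem hi hj) hxi hxj
  have hxp := mem_support_of_mem_walkEdges hi hxi'
  by_contra hxuv
  simp only [mem_insert_iff, mem_singleton_iff, not_or] at hxuv
  obtain ⟨e₁, he₁, e₂, he₂, hne, hx₁, hx₂⟩ := hp.exists_mem_edges_ne hxp hxuv.1 hxuv.2
  obtain ⟨i₁, hi₁, rfl⟩ := exists_mem_walkEdges he₁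
  obtain ⟨i₂, hi₂, rfl⟩ := exists_mem_walkEdges he₂
  exact hfree x hxp hxuv.1 hxuv.2 (G.isBranchPoint_of_mem_ends (fun h => hne (congrArg G.ends h))
    (ne_of_mem_of_not_mem hi₁ hj) (ne_of_mem_of_not_mem hi₂ hj) hx₁ hx₂ hxj')

structure IsFork (p : G.graph.Walk v u) (q : G.graph.Walk v w) : Prop where
  isBranchPoint_start : G.IsBranchPoint v
  isBranchPoint_left : G.IsBranchPoint u
  isBranchPoint_right : G.IsBranchPoint w
  left_ne_start : u ≠ v
  right_ne_start : w ≠ v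
  left_ne_right : u ≠ w
  isPath_left : p.IsPath
  isPath_right : q.IsPath
  isBranchFree_left : IsBranchFree p
  isBranchFree_right : IsBranchFree q
  eq_start_of_mem_support : ∀ t ∈ p.support, t ∈ q.support → t = v

theorem isFork_of_walks {c₁ c₂ : X} (hv : G.IsBranchPoint v) (hc₁ : G.IsBranchPoint c₁)
    (hc₂ : G.IsBranchPoint c₂) (hvc₁ : v ≠ c₁) (hvc₂ : v ≠ c₂) (L₁ : G.graph.Walk v c₁)
    (L₂ : G.graph.Walk v c₂) (hL : ∀ t ∈ L₁.support, t ∈ L₂.support → t = v) :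
    ∃ u w, ∃ (p : G.graph.Walk v u) (q : G.graph.Walk v w), IsFork p q := by
  have trim : ∀ {c : X} (L : G.graph.Walk v c), G.IsBranchPoint c → v ≠ c →
      ∃ u, (G.IsBranchPoint u ∧ u ≠ v) ∧ ∃ r : G.graph.Walk v u,
        r.IsPath ∧ r.support ⊆ L.support ∧ IsBranchFree r := fun L hc hvc => by
    obtain ⟨u, hu, r, hr, hrL, hrT⟩ :=
      L.exists_isPath_first_mem (T := {t | G.IsBranchPoint t ∧ t ≠ v}) ⟨hc, hvc.symm⟩
    exact ⟨u, hu, r, hr, hrL, fun t ht htv htu hbt => htu (hrT t ht ⟨hbt, htv⟩)⟩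
  obtain ⟨u, hu, p, hp, hpL, hpf⟩ := trim L₁ hc₁ hvc₁
  obtain ⟨w, hw, q, hq, hqL, hqf⟩ := trim L₂ hc₂ hvc₂
  have hpq : ∀ t ∈ p.support, t ∈ q.support → t = v := fun t h₁ h₂ => hL t (hpL h₁) (hqL h₂)
  refine ⟨u, w, p, q, hv, hu.1, hw.1, hu.2, hw.2, fun huw => hu.2 ?_, hp, hq, hpf, hqf, hpq⟩
  exact hpq u p.end_mem_support (huw ▸ q.end_mem_support)

/-- A path between two branch points and a path from a third branch point to its first vertex `z`
on the former form a tree with three leaves at branch points. Then `z` is a branch point too, and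
two of the three legs at `z`, cut at their first branch points, form a fork. -/
theorem exists_isFork [T2Space X] [ConnectedSpace X]
    (h3 : ∃ x y z : X, x ≠ y ∧ x ≠ z ∧ y ≠ z ∧
      G.IsBranchPoint x ∧ G.IsBranchPoint y ∧ G.IsBranchPoint z) :
    ∃ v u w, ∃ (p : G.graph.Walk v u) (q : G.graph.Walk v w), IsFork p q := by
  obtain ⟨b₁, b₂, b₃, h₁₂, h₁₃, h₂₃, hb₁, hb₂, hb₃⟩ := h3
  obtain ⟨w₁₂⟩ := G.reachable_of_isVertex hb₁.isVertex hb₂.isVertex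
  obtain ⟨w₃₁⟩ := G.reachable_of_isVertex hb₃.isVertex hb₁.isVertex
  have hp : w₁₂.bypass.IsPath := w₁₂.bypass_isPath
  set p := w₁₂.bypass
  obtain ⟨z, hzp, q, -, -, hqp⟩ :=
    w₃₁.exists_isPath_first_mem (T := {t | t ∈ p.support}) p.start_mem_support
  have hz : G.IsBranchPoint z := by
    by_cases h : z = b₁ ∨ z = b₂ ∨ z = b₃
    · rcases h with rfl | rfl | rfl <;> assumption
    simp only [not_or] at h
    have hq : ¬ q.Nil := SimpleGraph.Walk.not_nil_of_ne (Ne.symm h.2.2)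
    exact isBranchPoint_of_adj_of_notMem_support hp hzp h.1 h.2.1 (q.adj_penultimate hq) fun ht =>
      (q.adj_penultimate hq).ne (hqp _ (q.getVert_mem_support _) ht)
  have hsplit : ((p.takeUntil z hzp).append (p.dropUntil z hzp)).IsPath := by
    rwa [p.take_spec hzp]
  have hs₁₂ : ∀ t ∈ (p.takeUntil z hzp).reverse.support, t ∈ (p.dropUntil z hzp).support → t = z :=
    fun t h₁ h₂ => by_contra fun htz =>
      hsplit.ne_of_mem_support_of_append htz (by simpa using h₁) h₂ rfl
  have hs₁₃ : ∀ t ∈ (p.takeUntil z hzp).reverse.support, t ∈ q.reverse.support → t = z :=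
    fun t h₁ h₂ => hqp t (by simpa using h₂)
      (p.support_takeUntil_subset_support hzp (by simpa using h₁))
  have hs₂₃ : ∀ t ∈ (p.dropUntil z hzp).support, t ∈ q.reverse.support → t = z :=
    fun t h₁ h₂ => hqp t (by simpa using h₂) (p.support_dropUntil_subset_support hzp h₁)
  by_cases hz₁ : z = b₁
  · subst hz₁
    exact ⟨z, isFork_of_walks hz hb₂ hb₃ h₁₂ h₁₃ _ _ hs₂₃⟩
  by_cases hz₂ : z = b₂
  · subst hz₂
    exact ⟨z, isFork_of_walks hz hb₁ hb₃ hz₁ h₂₃ _ _ hs₁₃⟩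
  · exact ⟨z, isFork_of_walks hz hb₁ hb₂ hz₁ hz₂ _ _ hs₁₂⟩

end Walks

namespace IsFork

variable {G : TopGraph X} {u v w : X} {p : G.graph.Walk v u} {q : G.graph.Walk v w}

theorem five_le_sum_card_filter (hF : IsFork p q) :
    5 ≤ ∑ y ∈ ({u, v, w} : Finset X),
      ((G.edgesAt y).filter (· ∉ G.walkEdges p ∪ G.walkEdges q)).card := by
  have hdeg : ∀ y, G.IsBranchPoint y → 3 ≤ (G.edgesAt y).card := fun y hy =>
    G.degree_eq_card_edgesAt y ▸ hy
  have hu_q : u ∉ q.support := fun h =>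
    hF.left_ne_start (hF.eq_start_of_mem_support u p.end_mem_support h)
  have hw_p : w ∉ p.support := fun h =>
    hF.right_ne_start (hF.eq_start_of_mem_support w h q.end_mem_support)
  rw [Finset.sum_insert (by simp [hF.left_ne_start, hF.left_ne_right]),
    Finset.sum_insert (by simp [hF.right_ne_start.symm]), Finset.sum_singleton]
  have := G.card_edgesAt_le (G.walkEdges p) (G.walkEdges q) u
  have := G.card_edgesAt_le (G.walkEdges p) (G.walkEdges q) v
  have := G.card_edgesAt_le (G.walkEdges p) (G.walkEdges q) w
  have := hdeg u hF.isBranchPoint_left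
  have := hdeg v hF.isBranchPoint_start
  have := hdeg w hF.isBranchPoint_right
  have := card_filter_walkEdges_end_le_one hF.isPath_left
  have := card_filter_walkEdges_start_le_one hF.isPath_left
  have := card_filter_walkEdges_start_le_one hF.isPath_right
  have := card_filter_walkEdges_end_le_one hF.isPath_right
  have := card_filter_walkEdges_eq_zero (G := G) hu_q
  have := card_filter_walkEdges_eq_zero (G := G) hw_p
  omega

theorem sum_card_pair_inter_le [T2Space X] (hF : IsFork p q) {E : Finset (Fin G.n)}
    (hE : ∀ i ∈ E, i ∉ G.walkEdges p ∪ G.walkEdges q) {A : Set X} (hA : IsArc A)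
    (hpA : ∃ i ∈ G.walkEdges p, G.mid i ∈ A) (hqA : ∃ i ∈ G.walkEdges q, G.mid i ∈ A)
    (hEA : ∀ i ∈ E, G.mid i ∈ A) :
    4 + ∑ i ∈ E, ({G.edge i i0, G.edge i i1} ∩ ({u, v, w} : Finset X)).card ≤ 8 := by
  set Y : Finset X := {u, v, w}
  have hY : Y.card = 3 := Finset.card_eq_three.2
    ⟨u, v, w, hF.left_ne_start, hF.left_ne_right, hF.right_ne_start.symm, rfl⟩
  have hvu : ({v, u} ∩ Y).card = 2 := by
    rw [Finset.inter_eq_left.2 (by simp [Y, Finset.insert_subset_iff])]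
    exact Finset.card_pair hF.left_ne_start.symm
  have hvw : ({v, w} ∩ Y).card = 2 := by
    rw [Finset.inter_eq_left.2 (by simp [Y])]
    exact Finset.card_pair hF.right_ne_start.symm
  have key := G.sum_card_pair_inter_le_of_isArc (ι := Bool ⊕ E)
    (S := Sum.elim (fun b => cond b (G.walkEdges q) (G.walkEdges p)) fun i => {i.1})
    (a := Sum.elim (fun _ => v) fun i => G.edge i i0)
    (b := Sum.elim (fun b => cond b w u) fun i => G.edge i i1) ?_ ?_ ?_ hA ?_ Y
  · rw [Fintype.sum_sum_type, Fintype.sum_bool] at key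
    simp only [Sum.elim_inl, Sum.elim_inr, cond_true, cond_false, hvu, hvw, hY] at key
    rw [Finset.sum_coe_sort E fun i => ({G.edge i i0, G.edge i i1} ∩ Y).card] at key
    omega
  · rintro ((_ | _) | i)
    · exact separates_walkEdges hF.isPath_left hF.isBranchFree_left
    · exact separates_walkEdges hF.isPath_right hF.isBranchFree_right
    · exact G.separates_singleton i
  · exact Set.pairwise_disjoint_sumElim_singleton
      (disjoint_walkEdges hF.eq_start_of_mem_support) hE
  · rintro ((_ | _) | i)
    · exact ⟨hF.isBranchPoint_start.isVertex, hF.isBranchPoint_left.isVertex⟩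
    · exact ⟨hF.isBranchPoint_start.isVertex, hF.isBranchPoint_right.isVertex⟩
    · exact ⟨⟨i, Sym2.mem_mk_left _ _⟩, ⟨i, Sym2.mem_mk_right _ _⟩⟩
  · rintro ((_ | _) | i)
    exacts [hpA, hqA, ⟨i, rfl, hEA i i.2⟩]

theorem not_nArcConnected [T2Space X] (hF : IsFork p q) : ¬ NArcConnected X 7 := by
  intro h7
  obtain ⟨E, hE, hEcard, hEsum⟩ :=
    G.exists_finset_card_le_le_sum_card_pair_inter _ _ hF.five_le_sum_card_filter
  obtain ⟨i, hi⟩ := walkEdges_nonempty p hF.left_ne_start.symm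
  obtain ⟨j, hj⟩ := walkEdges_nonempty q hF.right_ne_start.symm
  have hs : (insert (G.mid i) (insert (G.mid j) (E.image G.mid))).card ≤ 7 := by
    have := Finset.card_insert_le (G.mid i) (insert (G.mid j) (E.image G.mid))
    have := Finset.card_insert_le (G.mid j) (E.image G.mid)
    have := Finset.card_image_le (s := E) (f := G.mid)
    omega
  obtain ⟨A, hA, hsA⟩ := h7.exists_isArc_superset hs (Finset.insert_nonempty _ _)
  have := hF.sum_card_pair_inter_le hE hA ⟨i, hi, hsA (Finset.mem_insert_self _ _)⟩
    ⟨j, hj, hsA (Finset.mem_insert_of_mem (Finset.mem_insert_self _ _))⟩ fun k hk =>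
      hsA (Finset.mem_insert_of_mem (Finset.mem_insert_of_mem (Finset.mem_image_of_mem _ hk)))
  omega

end IsFork

end TopGraph

/-- No finite graph with three or more branch points is `7`-arc connected. -/
theorem three_branch_points_not_seven_ac {X : Type*} [TopologicalSpace X] [T2Space X]
    [ConnectedSpace X] (G : TopGraph X)
    (h3 : ∃ x y z : X, x ≠ y ∧ x ≠ z ∧ y ≠ z ∧
      G.IsBranchPoint x ∧ G.IsBranchPoint y ∧ G.IsBranchPoint z) :
    ¬ NArcConnected X 7 := by
  obtain ⟨v, u, w, p, q, hF⟩ := G.exists_isFork h3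
  exact hF.not_nArcConnected
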